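/- arXiv:2109.10766 — 2 statements merged into one kernel-verified Lean document; each statement's English description precedes it below -/
import Mathlib

section
/- Let g be a (right) Leibniz algebra over a field k of characteristic zero. For every n ≥ 1, every X ∈ L_n and every y ∈ g, the element X·y (diagonal right action) again lies in L_n. -/
/-!
The diagonal action is only prescribed on pure tensors, and there it is a derivation: on
`g^{⊗n}` one has `(X ⊗ z)·y = (X·y) ⊗ z + X ⊗ (zy)` and `(z ⊗ X)·y = (zy) ⊗ X + z ⊗ (X·y)`.
Since `L_{n+1} ⊆ g^{⊗(n+1)}`, the action sends a generator `X ⊗ z - (-1)ⁿ z ⊗ X` of `L_{n+1}`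
to the sum of the generators built from `(X·y, z)` and `(X, zy)`, and induction on `n` applies.
-/

open scoped TensorProduct

/-- The pure tensor `x 0 ⊗ x 1 ⊗ ... ⊗ x (n-1)`, viewed inside the tensor algebra
`T(g) = ⊕ₙ g^{⊗n}`. -/
noncomputable def pt (k : Type*) [CommSemiring k] {g : Type*} [AddCommMonoid g] [Module k g]
    {n : ℕ} (x : Fin n → g) : TensorAlgebra k g :=
  (List.ofFn fun i => TensorAlgebra.ι k (x i)).prod

/-- The degree-`n` component `g^{⊗n}` of the tensor algebra: the span of the pure tensors of
length `n`. -/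
noncomputable def tensorGrade (k : Type*) [CommSemiring k] (g : Type*) [AddCommMonoid g]
    [Module k g] (n : ℕ) : Submodule k (TensorAlgebra k g) :=
  Submodule.span k {z | ∃ x : Fin n → g, z = pt k x}

open TensorAlgebra

section PureTensors

variable {k : Type*} [CommSemiring k] {g : Type*} [AddCommMonoid g] [Module k g]

lemma pt_snoc {n : ℕ} (x : Fin n → g) (z : g) : pt k (Fin.snoc x z) = pt k x * ι k z := by
  rw [pt, pt, List.ofFn_succ' (fun i => ι k (Fin.snoc x z i))]
  simp [Fin.snoc_castSucc, Fin.snoc_last]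

lemma pt_cons {n : ℕ} (x : Fin n → g) (z : g) : pt k (Fin.cons z x) = ι k z * pt k x := by
  rw [pt, pt, List.ofFn_succ (f := fun i => ι k (Fin.cons z x i))]
  simp

lemma pt_mem_tensorGrade {n : ℕ} (x : Fin n → g) : pt k x ∈ tensorGrade k g n :=
  Submodule.subset_span ⟨x, rfl⟩

lemma tensorGrade_le_iff {n : ℕ} {p : Submodule k (TensorAlgebra k g)} :
    tensorGrade k g n ≤ p ↔ ∀ x : Fin n → g, pt k x ∈ p := by
  simp [tensorGrade, Submodule.span_le, Set.subset_def]

lemma LinearMap.eq_of_mem_tensorGrade {M : Type*} [AddCommMonoid M] [Module k M]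
    {f f' : TensorAlgebra k g →ₗ[k] M} {n : ℕ} (h : ∀ x : Fin n → g, f (pt k x) = f' (pt k x))
    {X : TensorAlgebra k g} (hX : X ∈ tensorGrade k g n) : f X = f' X :=
  LinearMap.eqOn_span (by rintro _ ⟨x, rfl⟩; exact h x) hX

lemma mul_ι_mem_tensorGrade {n : ℕ} {X : TensorAlgebra k g} (hX : X ∈ tensorGrade k g n)
    (z : g) : X * ι k z ∈ tensorGrade k g (n + 1) := by
  refine (tensorGrade_le_iff (p := (tensorGrade k g (n + 1)).comap
    (LinearMap.mulRight k (ι k z)))).2 (fun x => ?_) hX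
  simpa [← pt_snoc] using pt_mem_tensorGrade (Fin.snoc x z)

lemma ι_mul_mem_tensorGrade {n : ℕ} {X : TensorAlgebra k g} (hX : X ∈ tensorGrade k g n)
    (z : g) : ι k z * X ∈ tensorGrade k g (n + 1) := by
  refine (tensorGrade_le_iff (p := (tensorGrade k g (n + 1)).comap
    (LinearMap.mulLeft k (ι k z)))).2 (fun x => ?_) hX
  simpa [← pt_cons] using pt_mem_tensorGrade (Fin.cons z x)

end PureTensors

section DiagonalAction

variable {k : Type*} [CommSemiring k] {g : Type*} [AddCommMonoid g] [Module k g]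

def IsDiagonalAction (mul : g →ₗ[k] g →ₗ[k] g)
    (act : TensorAlgebra k g →ₗ[k] g →ₗ[k] TensorAlgebra k g) : Prop :=
  ∀ (n : ℕ) (x : Fin n → g) (y : g),
    act (pt k x) y = ∑ i : Fin n, pt k (Function.update x i (mul (x i) y))

namespace IsDiagonalAction

variable {mul : g →ₗ[k] g →ₗ[k] g} {act : TensorAlgebra k g →ₗ[k] g →ₗ[k] TensorAlgebra k g}
  (hact : IsDiagonalAction mul act)
include hact

lemma act_mem_tensorGrade {n : ℕ} {X : TensorAlgebra k g} (hX : X ∈ tensorGrade k g n) (y : g) :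
    act X y ∈ tensorGrade k g n := by
  refine (tensorGrade_le_iff (p := (tensorGrade k g n).comap (act.flip y))).2 (fun x => ?_) hX
  rw [Submodule.mem_comap, LinearMap.flip_apply, hact]
  exact Submodule.sum_mem _ fun i _ => pt_mem_tensorGrade _

lemma act_mul_ι {n : ℕ} {X : TensorAlgebra k g} (hX : X ∈ tensorGrade k g n) (z y : g) :
    act (X * ι k z) y = act X y * ι k z + X * ι k (mul z y) := by
  refine LinearMap.eq_of_mem_tensorGrade (f := act.flip y ∘ₗ LinearMap.mulRight k (ι k z))
    (f' := LinearMap.mulRight k (ι k z) ∘ₗ act.flip y + LinearMap.mulRight k (ι k (mul z y)))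
    (fun x => ?_) hX
  simp only [LinearMap.comp_apply, LinearMap.add_apply, LinearMap.flip_apply,
    LinearMap.mulRight_apply]
  rw [← pt_snoc, hact, hact, Fin.sum_univ_castSucc, Finset.sum_mul, Fin.snoc_last,
    Fin.update_snoc_last, pt_snoc]
  congr 1
  refine Finset.sum_congr rfl fun i _ => ?_
  rw [Fin.snoc_castSucc, ← Fin.snoc_update, pt_snoc]

lemma act_ι_mul {n : ℕ} {X : TensorAlgebra k g} (hX : X ∈ tensorGrade k g n) (z y : g) :
    act (ι k z * X) y = ι k (mul z y) * X + ι k z * act X y := by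
  refine LinearMap.eq_of_mem_tensorGrade (f := act.flip y ∘ₗ LinearMap.mulLeft k (ι k z))
    (f' := LinearMap.mulLeft k (ι k (mul z y)) + LinearMap.mulLeft k (ι k z) ∘ₗ act.flip y)
    (fun x => ?_) hX
  simp only [LinearMap.comp_apply, LinearMap.add_apply, LinearMap.flip_apply,
    LinearMap.mulLeft_apply]
  rw [← pt_cons, hact, hact, Fin.sum_univ_succ, Finset.mul_sum, Fin.cons_zero,
    Fin.update_cons_zero, pt_cons]
  congr 1
  refine Finset.sum_congr rfl fun i _ => ?_
  rw [Fin.cons_succ, ← Fin.cons_update, pt_cons]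

end IsDiagonalAction

end DiagonalAction

lemma IsDiagonalAction.act_mul_ι_sub_smul_ι_mul {k : Type*} [CommRing k] {g : Type*}
    [AddCommMonoid g] [Module k g] {mul : g →ₗ[k] g →ₗ[k] g}
    {act : TensorAlgebra k g →ₗ[k] g →ₗ[k] TensorAlgebra k g} (hact : IsDiagonalAction mul act)
    {n : ℕ} {X : TensorAlgebra k g} (hX : X ∈ tensorGrade k g n) (c : k) (z y : g) :
    act (X * ι k z - c • (ι k z * X)) y =
      (act X y * ι k z - c • (ι k z * act X y)) +
        (X * ι k (mul z y) - c • (ι k (mul z y) * X)) := by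
  rw [map_sub, map_smul, LinearMap.sub_apply, LinearMap.smul_apply, hact.act_mul_ι hX,
    hact.act_ι_mul hX, smul_add]
  abel

section Brackets

variable {k : Type*} [CommRing k] {g : Type*} [AddCommMonoid g] [Module k g]
  {L : ℕ → Submodule k (TensorAlgebra k g)}
  (hLsucc : ∀ n : ℕ, 1 ≤ n → L (n + 1) =
    Submodule.span k {z | ∃ X ∈ L n, ∃ y : g, z = X * ι k y - ((-1 : k) ^ n) • (ι k y * X)})
include hLsucc

lemma bracket_mem_succ {n : ℕ} (hn : 1 ≤ n) {X : TensorAlgebra k g} (hX : X ∈ L n) (y : g) :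
    X * ι k y - ((-1 : k) ^ n) • (ι k y * X) ∈ L (n + 1) := by
  rw [hLsucc n hn]
  exact Submodule.subset_span ⟨X, hX, y, rfl⟩

lemma le_tensorGrade_of_eq_span_brackets (hL1 : L 1 = tensorGrade k g 1) (n : ℕ) :
    L (n + 1) ≤ tensorGrade k g (n + 1) := by
  induction n with
  | zero => exact hL1.le
  | succ m ih =>
    rw [hLsucc (m + 1) le_add_self, Submodule.span_le]
    rintro _ ⟨X, hX, y, rfl⟩
    exact sub_mem (mul_ι_mem_tensorGrade (ih hX) y)
      (Submodule.smul_mem _ _ (ι_mul_mem_tensorGrade (ih hX) y))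

end Brackets

theorem primitives_stable_under_diagonal_action_general
    {k : Type*} [Field k]
    {g : Type*} [AddCommGroup g] [Module k g]
    (mul : g →ₗ[k] g →ₗ[k] g)
    (act : TensorAlgebra k g →ₗ[k] g →ₗ[k] TensorAlgebra k g)
    (hact : ∀ (n : ℕ) (x : Fin n → g) (y : g),
      act (pt k x) y = ∑ i : Fin n, pt k (Function.update x i (mul (x i) y)))
    (L : ℕ → Submodule k (TensorAlgebra k g))
    (hL1 : L 1 = tensorGrade k g 1)
    (hLsucc : ∀ n : ℕ, 1 ≤ n → L (n + 1) =
      Submodule.span k {z | ∃ X ∈ L n, ∃ y : g,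
        z = X * TensorAlgebra.ι k y - ((-1 : k) ^ n) • (TensorAlgebra.ι k y * X)})
    (n : ℕ) (X : TensorAlgebra k g) (hX : X ∈ L (n + 1)) (y : g) :
    act X y ∈ L (n + 1) := by
  replace hact : IsDiagonalAction mul act := hact
  induction n generalizing X with
  | zero =>
    rw [hL1] at hX ⊢
    exact hact.act_mem_tensorGrade hX y
  | succ m ih =>
    rw [hLsucc (m + 1) le_add_self] at hX
    refine (Submodule.span_le (p := (L (m + 2)).comap (act.flip y))).2 ?_ hX
    rintro _ ⟨W, hW, z, rfl⟩
    have hW_grade := le_tensorGrade_of_eq_span_brackets hLsucc hL1 m hW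
    rw [SetLike.mem_coe, Submodule.mem_comap, LinearMap.flip_apply,
      hact.act_mul_ι_sub_smul_ι_mul hW_grade]
    exact add_mem (bracket_mem_succ hLsucc le_add_self (ih _ hW) z)
      (bracket_mem_succ hLsucc le_add_self hW (mul z y))

/-- for a (right) Leibniz algebra `g` over a field `k` of characteristic zero,
the subspaces `L n` (model for `Lie_n(sg) ⊆ g^{⊗n}`) are stable under the diagonal right
action of `g`: for `n ≥ 1`, `X ∈ L n` and `y ∈ g`, `X·y ∈ L n`.
Here `act` is the (total) diagonal right action, determined on pure tensors by
`(x₁⊗…⊗xₙ)·y = Σᵢ x₁⊗…⊗(xᵢy)⊗…⊗xₙ`. -/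
theorem primitives_stable_under_diagonal_action
    {k : Type*} [Field k] [CharZero k]
    {g : Type*} [AddCommGroup g] [Module k g]
    (mul : g →ₗ[k] g →ₗ[k] g)
    (hleib : ∀ x y z : g, mul x (mul y z) = mul (mul x y) z - mul (mul x z) y)
    (act : TensorAlgebra k g →ₗ[k] g →ₗ[k] TensorAlgebra k g)
    (hact : ∀ (n : ℕ) (x : Fin n → g) (y : g),
      act (pt k x) y = ∑ i : Fin n, pt k (Function.update x i (mul (x i) y)))
    (L : ℕ → Submodule k (TensorAlgebra k g))
    (hL1 : L 1 = tensorGrade k g 1)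
    (hLsucc : ∀ n : ℕ, 1 ≤ n → L (n + 1) =
      Submodule.span k {z | ∃ X ∈ L n, ∃ y : g,
        z = X * TensorAlgebra.ι k y - ((-1 : k) ^ n) • (TensorAlgebra.ι k y * X)})
    (n : ℕ) (X : TensorAlgebra k g) (hX : X ∈ L (n + 1)) (y : g) :
    act X y ∈ L (n + 1) :=
  primitives_stable_under_diagonal_action_general mul act hact L hL1 hLsucc n X hX y
end

section
/- Let g be a (right) Leibniz algebra over a field k of characteristic zero. Then the image of L_2 under the Leibniz differential d_2 : g^{⊗2} → g equals the Leibniz kernel K. Consequently the degree-one homology of the Pirashvili complex, namely the cokernel of d_2 restricted to L_2 (note d_1 = 0), is isomorphic as a k-vector space to g_Lie = g/K. -/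
open scoped TensorProduct

/-!
On `g^{⊗1} ⊕ g^{⊗2}` everything is explicit: `L 2` is spanned by the symmetric tensors
`x ⊗ y + y ⊗ x`, and `d₂ (x ⊗ y + y ⊗ x) = -(x y + y x)`. By polarization,
`x y + y x = (x + y)(x + y) - x x - y y`, and conversely `x x = ½ (x x + x x)`, so when `2` is
invertible the elements `x y + y x` span exactly the Leibniz kernel `K`. Since `d₁ = 0` and
`ι : g → g^{⊗1}` is an isomorphism, the degree-one homology is then `g ⧸ K`.
-/

open TensorAlgebra

section PureTensors

variable {k : Type*} [CommSemiring k] {g : Type*} [AddCommMonoid g] [Module k g]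

lemma pt_one (x : Fin 1 → g) : pt k x = ι k (x 0) := by
  simp [pt, List.ofFn_succ]

lemma pt_two (x : Fin 2 → g) : pt k x = ι k (x 0) * ι k (x 1) := by
  simp [pt, List.ofFn_succ]

variable (k g) in
lemma tensorGrade_one_eq_range : tensorGrade k g 1 = LinearMap.range (ι k (M := g)) := by
  apply le_antisymm
  · rw [tensorGrade, Submodule.span_le]
    rintro _ ⟨x, rfl⟩
    exact ⟨x 0, (pt_one x).symm⟩
  · rintro _ ⟨x, rfl⟩
    exact Submodule.subset_span ⟨fun _ => x, (pt_one (fun _ => x)).symm⟩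

end PureTensors

section Polarization

variable {k : Type*} [Field k] {g : Type*} [AddCommGroup g] [Module k g]

lemma span_mul_add_mul_swap_eq_span_squares [NeZero (2 : k)] (mul : g →ₗ[k] g →ₗ[k] g) :
    Submodule.span k {w | ∃ x y, w = mul x y + mul y x} =
      Submodule.span k {w | ∃ x, w = mul x x} := by
  apply le_antisymm
  · rw [Submodule.span_le]
    rintro _ ⟨x, y, rfl⟩
    have hpolar : mul x y + mul y x = mul (x + y) (x + y) - mul x x - mul y y := by
      simp only [map_add, LinearMap.add_apply]
      abel
    rw [hpolar]
    refine Submodule.sub_mem _ (Submodule.sub_mem _ ?_ ?_) ?_ <;>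
      exact Submodule.subset_span ⟨_, rfl⟩
  · rw [Submodule.span_le]
    rintro _ ⟨x, rfl⟩
    have hhalf : mul x x = (2 : k)⁻¹ • (mul x x + mul x x) := by
      rw [← two_smul k, smul_smul, inv_mul_cancel₀ two_ne_zero, one_smul]
    rw [hhalf]
    exact Submodule.smul_mem _ _ (Submodule.subset_span ⟨x, x, rfl⟩)

end Polarization

section LeibnizDifferential

variable {k : Type*} [CommRing k] {g : Type*} [AddCommGroup g] [Module k g]

def IsLeibnizDifferential (mul : g →ₗ[k] g →ₗ[k] g)
    (D : TensorAlgebra k g →ₗ[k] TensorAlgebra k g) : Prop :=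
  ∀ (m : ℕ) (x : Fin (m + 1) → g),
    D (pt k x) = ∑ j : Fin (m + 1),
      ∑ i ∈ Finset.univ.filter (fun i : Fin m => i.castSucc < j),
        ((-1 : k) ^ (j : ℕ)) •
          pt k (Function.update (fun a : Fin m => x (j.succAbove a)) i
            (mul (x i.castSucc) (x j)))

lemma IsLeibnizDifferential.apply_ι_mul_ι {mul : g →ₗ[k] g →ₗ[k] g}
    {D : TensorAlgebra k g →ₗ[k] TensorAlgebra k g} (hD : IsLeibnizDifferential mul D)
    (x y : g) :
    D (ι k x * ι k y) = -ι k (mul x y) := by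
  have hfilter₀ : Finset.univ.filter (fun i : Fin 1 => i.castSucc < (0 : Fin 2)) = ∅ := by
    decide
  have hfilter₁ : Finset.univ.filter (fun i : Fin 1 => i.castSucc < (1 : Fin 2)) =
      Finset.univ := by
    decide
  rw [← show pt k ![x, y] = ι k x * ι k y from pt_two _, hD 1, Fin.sum_univ_two,
    hfilter₀, hfilter₁, Finset.sum_empty, Fin.sum_univ_one]
  simp [pt, List.ofFn_succ]

lemma L_two_eq_span_anticommutators (L : ℕ → Submodule k (TensorAlgebra k g))
    (hL1 : L 1 = tensorGrade k g 1)
    (hL2 : L 2 = Submodule.span k {z | ∃ X ∈ L 1, ∃ y : g,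
        z = X * ι k y - ((-1 : k) ^ 1) • (ι k y * X)}) :
    L 2 = Submodule.span k {z | ∃ x y : g, z = ι k x * ι k y + ι k y * ι k x} := by
  rw [hL2, hL1, tensorGrade_one_eq_range]
  congr 1
  ext z
  simp [sub_neg_eq_add]

end LeibnizDifferential

noncomputable def quotientComapMapEquivOfInjective {k M N : Type*} [Ring k] [AddCommGroup M]
    [Module k M] [AddCommGroup N] [Module k N] (f : M →ₗ[k] N) (hf : Function.Injective f)
    (P : Submodule k M) :
    (LinearMap.range f ⧸ (P.map f).comap (LinearMap.range f).subtype) ≃ₗ[k] (M ⧸ P) :=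
  (Submodule.Quotient.equiv P _ (LinearEquiv.ofInjective f hf) (by
    ext z
    obtain ⟨x, rfl⟩ := (LinearEquiv.ofInjective f hf).surjective z
    simp [hf.eq_iff])).symm

theorem pirashvili_degree_one_homology_general
    {k : Type*} [Field k] [CharZero k]
    {g : Type*} [AddCommGroup g] [Module k g]
    (mul : g →ₗ[k] g →ₗ[k] g)
    (D : TensorAlgebra k g →ₗ[k] TensorAlgebra k g)
    (hD : ∀ (m : ℕ) (x : Fin (m + 1) → g),
      D (pt k x) = ∑ j : Fin (m + 1),
        ∑ i ∈ Finset.univ.filter (fun i : Fin m => i.castSucc < j),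
          ((-1 : k) ^ (j : ℕ)) •
            pt k (Function.update (fun a : Fin m => x (j.succAbove a)) i
              (mul (x i.castSucc) (x j))))
    (L : ℕ → Submodule k (TensorAlgebra k g))
    (hL1 : L 1 = tensorGrade k g 1)
    (hLsucc : ∀ n : ℕ, 1 ≤ n → L (n + 1) =
      Submodule.span k {z | ∃ X ∈ L n, ∃ y : g,
        z = X * TensorAlgebra.ι k y - ((-1 : k) ^ n) • (TensorAlgebra.ι k y * X)})
    (K : Submodule k g)
    (hK : K = Submodule.span k {w : g | ∃ x : g, w = mul x x}) :
    Submodule.map D (L 2) = Submodule.map (TensorAlgebra.ι k) K ∧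
    Nonempty
      ((↥(tensorGrade k g 1) ⧸
          (Submodule.map D (L 2)).comap (tensorGrade k g 1).subtype) ≃ₗ[k] (g ⧸ K)) := by
  have hD' : IsLeibnizDifferential mul D := hD
  have himage : Submodule.map D (L 2) = Submodule.map (ι k) K := by
    have hanti : D '' {z | ∃ x y : g, z = ι k x * ι k y + ι k y * ι k x} =
        -(ι k '' {w | ∃ x y, w = mul x y + mul y x}) := by
      ext z
      simp only [Set.mem_image, Set.mem_ofPred_eq, ↓existsAndEq, map_add, hD'.apply_ι_mul_ι,
        true_and, Set.mem_neg]
      simp_rw [← neg_add, neg_eq_iff_eq_neg]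
    rw [L_two_eq_span_anticommutators L hL1 (hLsucc 1 le_rfl), hK,
      ← span_mul_add_mul_swap_eq_span_squares, Submodule.map_span, Submodule.map_span, hanti,
      Submodule.span_neg]
  refine ⟨himage, ?_⟩
  rw [himage, tensorGrade_one_eq_range]
  exact ⟨quotientComapMapEquivOfInjective _ ι_leftInverse.injective K⟩

/-- for a (right) Leibniz algebra `g` over a field `k` of characteristic zero,
the image of `L 2` under the Leibniz differential `d₂ : g^{⊗2} → g` equals the Leibniz
kernel `K` (both viewed inside the degree-`1` part of the tensor algebra via `ι`), and
consequently the degree-one homology of the Pirashvili complex — the cokernel of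
`d₂ : L 2 → g^{⊗1}` — is isomorphic as a `k`-vector space to `g_Lie = g ⧸ K`. -/
theorem pirashvili_degree_one_homology
    {k : Type*} [Field k] [CharZero k]
    {g : Type*} [AddCommGroup g] [Module k g]
    (mul : g →ₗ[k] g →ₗ[k] g)
    (hleib : ∀ x y z : g, mul x (mul y z) = mul (mul x y) z - mul (mul x z) y)
    (D : TensorAlgebra k g →ₗ[k] TensorAlgebra k g)
    (hD : ∀ (m : ℕ) (x : Fin (m + 1) → g),
      D (pt k x) = ∑ j : Fin (m + 1),
        ∑ i ∈ Finset.univ.filter (fun i : Fin m => i.castSucc < j),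
          ((-1 : k) ^ (j : ℕ)) •
            pt k (Function.update (fun a : Fin m => x (j.succAbove a)) i
              (mul (x i.castSucc) (x j))))
    (L : ℕ → Submodule k (TensorAlgebra k g))
    (hL1 : L 1 = tensorGrade k g 1)
    (hLsucc : ∀ n : ℕ, 1 ≤ n → L (n + 1) =
      Submodule.span k {z | ∃ X ∈ L n, ∃ y : g,
        z = X * TensorAlgebra.ι k y - ((-1 : k) ^ n) • (TensorAlgebra.ι k y * X)})
    (K : Submodule k g)
    (hK : K = Submodule.span k {w : g | ∃ x : g, w = mul x x}) :
    Submodule.map D (L 2) = Submodule.map (TensorAlgebra.ι k) K ∧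
    Nonempty
      ((↥(tensorGrade k g 1) ⧸
          (Submodule.map D (L 2)).comap (tensorGrade k g 1).subtype) ≃ₗ[k] (g ⧸ K)) :=
  pirashvili_degree_one_homology_general mul D hD L hL1 hLsucc K hK
end
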